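/- arXiv:1304.5108 — 2 statements merged into one kernel-verified Lean document; each statement's English description precedes it below -/
import Mathlib

section
/- Let L be the abelian group on generators x₁, x₂, x₃ with relations 2x₁ = 2x₂ = n·x₃ = c (n ≥ 2). Define x ≥ 0 if and only if l ≥ 0, where x = l₁x₁ + l₂x₂ + l₃x₃ + l·c is the normal form of x. Then for ω := c − x₁ − x₂ − x₃, every x ∈ L satisfies exactly one of the two conditions: x ≥ 0, or x ≤ ω + c. -/
/-- The subgroup of relations `2x₁ = 2x₂` and `2x₁ = n·x₃` inside ℤ³. -/
def rel (n : ℕ) : AddSubgroup (ℤ × ℤ × ℤ) :=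
  AddSubgroup.closure {(2, -2, 0), (2, 0, -(n : ℤ))}

/-- The rank one abelian group `L = ⟨x₁,x₂,x₃ | 2x₁ = 2x₂ = n·x₃⟩`. -/
abbrev L (n : ℕ) := (ℤ × ℤ × ℤ) ⧸ rel n

/-- The generator x₁ of L. -/
def x1 (n : ℕ) : L n := QuotientAddGroup.mk' (rel n) (1, 0, 0)

/-- The generator x₂ of L. -/
def x2 (n : ℕ) : L n := QuotientAddGroup.mk' (rel n) (0, 1, 0)

/-- The generator x₃ of L. -/
def x3 (n : ℕ) : L n := QuotientAddGroup.mk' (rel n) (0, 0, 1)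

/-- The canonical element c = 2x₁ (= 2x₂ = n·x₃). -/
def cc (n : ℕ) : L n := (2 : ℤ) • x1 n

/-- The dualizing element ω = c - x₁ - x₂ - x₃. -/
def om (n : ℕ) : L n := cc n - x1 n - x2 n - x3 n

/-- `x ≥ 0` in L: the coefficient of `c` in the (unique) normal form
`x = l₁x₁ + l₂x₂ + l₃x₃ + l·c` (with 0 ≤ l₁,l₂ ≤ 1, 0 ≤ l₃ ≤ n-1) is nonnegative. -/
def Nonneg (n : ℕ) (x : L n) : Prop :=
  ∃ l1 l2 l3 l : ℤ, 0 ≤ l1 ∧ l1 ≤ 1 ∧ 0 ≤ l2 ∧ l2 ≤ 1 ∧ 0 ≤ l3 ∧ l3 ≤ (n : ℤ) - 1 ∧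
    0 ≤ l ∧ x = l1 • x1 n + l2 • x2 n + l3 • x3 n + l • cc n

/-- The order on L: `x ≤ y` iff `y - x ≥ 0`. -/
def leL (n : ℕ) (x y : L n) : Prop := Nonneg n (y - x)

/-!
Represent `x ∈ L` by `(a, b, c) ∈ ℤ³`. Reducing `b` modulo `2` and `c` modulo `n` and then the
first coordinate modulo `2` shows that the coefficient of `c` in the normal form of `x` is
`k(x) = ⌊(a + 2⌊b/2⌋ + 2⌊c/n⌋) / 2⌋`, so `x ≥ 0` iff `k(x) ≥ 0`. Since `ω + c` is represented by
`(3, -1, -1)` and `⌊(-1 - t)/m⌋ = -1 - ⌊t/m⌋`, we get `k(ω + c - x) = -1 - k(x)`, and exactly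
one of `k(x)` and `-1 - k(x)` is nonnegative.
-/

open QuotientAddGroup

lemma mem_rel_iff {n : ℕ} {v : ℤ × ℤ × ℤ} :
    v ∈ rel n ↔ ∃ α β : ℤ, v = (2 * α + 2 * β, -2 * α, -n * β) := by
  rw [rel, AddSubgroup.mem_closure_pair]
  refine exists₂_congr fun α β => ?_
  rw [eq_comm]
  simp only [Prod.ext_iff, Prod.fst_add, Prod.snd_add, Prod.smul_mk, smul_eq_mul]
  constructor <;> rintro ⟨h1, h2, h3⟩ <;> refine ⟨?_, ?_, ?_⟩ <;> linarith

lemma smul_x1_add_smul_x2_add_smul_x3_add_smul_cc (n : ℕ) (l1 l2 l3 l : ℤ) :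
    l1 • x1 n + l2 • x2 n + l3 • x3 n + l • cc n = (mk (l1 + 2 * l, l2, l3) : L n) := by
  have h : ((l1 + 2 * l, l2, l3) : ℤ × ℤ × ℤ)
      = l1 • (1, 0, 0) + l2 • (0, 1, 0) + l3 • (0, 0, 1) + l • ((2 : ℤ) • (1, 0, 0)) := by
    simp only [Prod.smul_mk, smul_eq_mul, Prod.mk_add_mk]
    ext <;> simp only <;> ring
  rw [h]
  simp only [x1, x2, x3, cc, mk'_apply, mk_add, mk_zsmul]

lemma om_add_cc (n : ℕ) : om n + cc n = (mk (3, -1, -1) : L n) := by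
  have h := smul_x1_add_smul_x2_add_smul_x3_add_smul_cc n 1 (-1) (-1) 1
  simp only [one_smul, neg_smul] at h
  rw [om, show ((3 : ℤ), (-1 : ℤ), (-1 : ℤ)) = (1 + 2 * 1, -1, -1) by norm_num, ← h]
  abel

/-- The coefficient of `c` in the normal form of the class of `v`. -/
def cCoeff (n : ℕ) (v : ℤ × ℤ × ℤ) : ℤ := (v.1 + 2 * (v.2.1 / 2) + 2 * (v.2.2 / n)) / 2

lemma cCoeff_add_of_mem_rel {n : ℕ} (hn : n ≠ 0) (v : ℤ × ℤ × ℤ) {r : ℤ × ℤ × ℤ}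
    (hr : r ∈ rel n) : cCoeff n (v + r) = cCoeff n v := by
  obtain ⟨α, β, rfl⟩ := mem_rel_iff.mp hr
  obtain ⟨a, b, c⟩ := v
  have hb : (b + -2 * α) / 2 = b / 2 - α := by omega
  have hc : (c + -n * β) / n = c / n - β := by
    rw [show c + -n * β = c + n * (-β) by ring, Int.add_mul_ediv_left _ _ (by exact_mod_cast hn)]
    ring
  simp only [cCoeff, Prod.mk_add_mk, hb, hc]
  congr 1
  ring

lemma cCoeff_of_bounds {n : ℕ} {l1 l2 l3 l : ℤ} (h1 : 0 ≤ l1) (h1' : l1 ≤ 1) (h2 : 0 ≤ l2)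
    (h2' : l2 ≤ 1) (h3 : 0 ≤ l3) (h3' : l3 < n) : cCoeff n (l1 + 2 * l, l2, l3) = l := by
  have hl3 : l3 / n = 0 := Int.ediv_eq_zero_of_lt h3 h3'
  simp only [cCoeff, hl3]
  omega

lemma exists_normal_form {n : ℕ} (hn : 0 < n) (v : ℤ × ℤ × ℤ) :
    ∃ l1 l2 l3 : ℤ, 0 ≤ l1 ∧ l1 ≤ 1 ∧ 0 ≤ l2 ∧ l2 ≤ 1 ∧ 0 ≤ l3 ∧ l3 ≤ (n : ℤ) - 1 ∧
      (mk v : L n) = l1 • x1 n + l2 • x2 n + l3 • x3 n + cCoeff n v • cc n := by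
  obtain ⟨a, b, c⟩ := v
  have hn' : (0 : ℤ) < n := by exact_mod_cast hn
  set s := a + 2 * (b / 2) + 2 * (c / n)
  refine ⟨s % 2, b % 2, c % n, by omega, by omega, by omega, by omega,
    Int.emod_nonneg c hn'.ne', by linarith [Int.emod_lt_of_pos c hn'], ?_⟩
  rw [smul_x1_add_smul_x2_add_smul_x3_add_smul_cc, QuotientAddGroup.eq, mem_rel_iff]
  refine ⟨b / 2, c / n, ?_⟩
  have hc := Int.mul_ediv_add_emod c n
  simp only [cCoeff, Prod.neg_mk, Prod.mk_add_mk, Prod.mk.injEq]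
  refine ⟨by omega, by omega, by linarith⟩

lemma nonneg_mk_iff {n : ℕ} (hn : 0 < n) (v : ℤ × ℤ × ℤ) :
    Nonneg n (mk v) ↔ 0 ≤ cCoeff n v := by
  constructor
  · rintro ⟨l1, l2, l3, l, h1, h1', h2, h2', h3, h3', hl, hv⟩
    rw [smul_x1_add_smul_x2_add_smul_x3_add_smul_cc, QuotientAddGroup.eq] at hv
    have hw := cCoeff_add_of_mem_rel hn.ne' v hv
    rw [add_neg_cancel_left, cCoeff_of_bounds h1 h1' h2 h2' h3 (by omega)] at hw
    exact hw ▸ hl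
  · intro hv
    obtain ⟨l1, l2, l3, h1, h1', h2, h2', h3, h3', hmk⟩ := exists_normal_form hn v
    exact ⟨l1, l2, l3, _, h1, h1', h2, h2', h3, h3', hv, hmk⟩

lemma neg_one_sub_ediv (t : ℤ) {m : ℤ} (hm : 0 < m) : (-1 - t) / m = -1 - t / m := by
  rw [Int.ediv_eq_iff_of_pos hm]
  have h1 := Int.emod_nonneg t hm.ne'
  have h2 := Int.emod_lt_of_pos t hm
  have h3 := Int.mul_ediv_add_emod t m
  constructor <;> nlinarith

lemma cCoeff_sub {n : ℕ} (hn : 0 < n) (v : ℤ × ℤ × ℤ) :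
    cCoeff n ((3, -1, -1) - v) = -1 - cCoeff n v := by
  obtain ⟨a, b, c⟩ := v
  simp only [cCoeff, Prod.mk_sub_mk]
  rw [neg_one_sub_ediv c (by exact_mod_cast hn)]
  omega

/-- every x ∈ L satisfies exactly one of `x ≥ 0` or `x ≤ ω + c`. -/
theorem trichotomy (n : ℕ) (hn : 2 ≤ n) (x : L n) :
    Xor' (Nonneg n x) (leL n x (om n + cc n)) := by
  have hn' : 0 < n := by omega
  induction x using QuotientAddGroup.induction_on with
  | H v =>
    rw [leL, om_add_cc, ← mk_sub, nonneg_mk_iff hn', nonneg_mk_iff hn', cCoeff_sub hn']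
    exact xor_iff_iff_not.mpr (by omega)
end

section
/- Let L = ⟨x₁,x₂,x₃ | 2x₁=2x₂=n x₃ = c⟩ with n ≥ 2. Suppose I ⊆ L is a finite subset with 0 ∈ I such that every element x ∈ I satisfies either 0 ≤ x ≤ c or x = x₁ − x₂, and such that I contains no pair {k x₃, x₁ − x₂} with k ≥ 1. If |I| = n + 3, then I = {x ∈ L : 0 ≤ x ≤ c}. -/
section
variable {n : ℕ}

theorem invariants_of_mem_rel {v : ℤ × ℤ × ℤ} (hv : v ∈ rel n) :
    Even v.2.1 ∧ (n : ℤ) ∣ v.2.2 ∧ n * v.1 + n * v.2.1 + 2 * v.2.2 = 0 := by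
  induction hv using AddSubgroup.closure_induction with
  | mem v hv =>
    rcases hv with rfl | rfl
    · exact ⟨⟨-1, by norm_num⟩, dvd_zero _, by ring⟩
    · exact ⟨Even.zero, (dvd_refl _).neg_right, by ring⟩
  | zero => exact ⟨Even.zero, dvd_zero _, by simp⟩
  | add v w _ _ hv hw =>
    refine ⟨hv.1.add hw.1, dvd_add hv.2.1 hw.2.1, ?_⟩
    simp only [Prod.fst_add, Prod.snd_add]
    linear_combination hv.2.2 + hw.2.2
  | neg v _ hv =>
    refine ⟨hv.1.neg, hv.2.1.neg_right, ?_⟩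
    simp only [Prod.fst_neg, Prod.snd_neg]
    linear_combination -hv.2.2

theorem zsmul_x1_add_zsmul_x2_add_zsmul_x3_add_zsmul_cc (l1 l2 l3 l : ℤ) :
    l1 • x1 n + l2 • x2 n + l3 • x3 n + l • cc n = ((l1 + 2 * l, l2, l3) : L n) := by
  simp only [cc, x1, x2, x3, QuotientAddGroup.mk'_apply, ← QuotientAddGroup.mk_zsmul,
    ← QuotientAddGroup.mk_add, smul_smul]
  congr 1
  ext <;> simp [mul_comm]

theorem two_zsmul_x2 : (2 : ℤ) • x2 n = cc n := by
  rw [cc, x1, x2, ← map_zsmul, ← map_zsmul, QuotientAddGroup.mk'_eq_mk']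
  exact ⟨(2, -2, 0), AddSubgroup.subset_closure (by simp), by ext <;> simp⟩

theorem natCast_zsmul_x3 : (n : ℤ) • x3 n = cc n := by
  rw [cc, x1, x3, ← map_zsmul, ← map_zsmul, QuotientAddGroup.mk'_eq_mk']
  exact ⟨(2, 0, -n), AddSubgroup.subset_closure (by simp), by ext <;> simp⟩

theorem cc_eq_mk : cc n = (((2, 0, 0) : ℤ × ℤ × ℤ) : L n) := by
  simpa using zsmul_x1_add_zsmul_x2_add_zsmul_x3_add_zsmul_cc (n := n) 0 0 0 1

theorem eq_of_nonneg_of_le_cc (hn : 0 < n) {x : L n} (h0 : leL n 0 x) (hc : leL n x (cc n)) :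
    x = x1 n ∨ x = x2 n ∨ ∃ k : ℤ, 0 ≤ k ∧ k ≤ n ∧ x = k • x3 n := by
  obtain ⟨l1, l2, l3, l, hl1, hl1', hl2, hl2', hl3, hl3', hl, hx⟩ := h0
  obtain ⟨m1, m2, m3, m, hm1, hm1', hm2, hm2', hm3, hm3', hm, hcx⟩ := hc
  rw [sub_zero] at hx
  have hsum : cc n = ((l1 + m1 + 2 * (l + m), l2 + m2, l3 + m3) : L n) := by
    rw [← sub_add_cancel (cc n) x, hcx, hx, zsmul_x1_add_zsmul_x2_add_zsmul_x3_add_zsmul_cc,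
      zsmul_x1_add_zsmul_x2_add_zsmul_x3_add_zsmul_cc, ← QuotientAddGroup.mk_add]
    congr 1
    ext <;> simp only [Prod.fst_add, Prod.snd_add] <;> ring
  rw [cc_eq_mk, QuotientAddGroup.eq] at hsum
  obtain ⟨⟨e, he⟩, ⟨t, ht⟩, hdeg⟩ := invariants_of_mem_rel hsum
  simp only [Prod.fst_add, Prod.snd_add, Prod.fst_neg, Prod.snd_neg, neg_zero, zero_add]
    at he ht hdeg
  have hdeg' : (n : ℤ) * (l1 + m1 + 2 * (l + m) + l2 + m2 + 2 * t) = n * 2 := by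
    linear_combination hdeg - 2 * ht
  replace hdeg' := mul_left_cancel₀ (by positivity) hdeg'
  have hcoeffs : (l1 = 1 ∧ l2 = 0 ∧ l3 = 0 ∧ l = 0) ∨ (l1 = 0 ∧ l2 = 1 ∧ l3 = 0 ∧ l = 0) ∨
      (l1 = 0 ∧ l2 = 0 ∧ l = 0) ∨ (l1 = 0 ∧ l2 = 0 ∧ l3 = 0 ∧ l = 1) := by
    have ht0 : 0 ≤ t := by nlinarith
    obtain rfl | rfl : t = 0 ∨ t = 1 := by omega
    all_goals omega
  rcases hcoeffs with ⟨rfl, rfl, rfl, rfl⟩ | ⟨rfl, rfl, rfl, rfl⟩ | ⟨rfl, rfl, rfl⟩ |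
    ⟨rfl, rfl, rfl, rfl⟩
  · exact Or.inl (by simpa using hx)
  · exact Or.inr (Or.inl (by simpa using hx))
  · exact Or.inr (Or.inr ⟨l3, hl3, by omega, by simpa using hx⟩)
  · exact Or.inr (Or.inr ⟨n, by positivity, le_rfl, by rw [natCast_zsmul_x3]; simpa using hx⟩)

theorem nonneg_x1 (hn : 0 < n) : Nonneg n (x1 n) :=
  ⟨1, 0, 0, 0, by simpa using Nat.one_le_of_lt hn⟩

theorem nonneg_x2 (hn : 0 < n) : Nonneg n (x2 n) :=
  ⟨0, 1, 0, 0, by simpa using Nat.one_le_of_lt hn⟩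

theorem nonneg_zsmul_x3 (hn : 0 < n) {k : ℤ} (hk0 : 0 ≤ k) (hkn : k ≤ n) : Nonneg n (k • x3 n) := by
  obtain hk | rfl := hkn.lt_or_eq
  · exact ⟨0, 0, k, 0, by simpa using And.intro hk0 hk⟩
  · exact ⟨0, 0, 0, 1, by rw [natCast_zsmul_x3]; simpa using Nat.one_le_of_lt hn⟩

theorem nonneg_and_le_cc_iff (hn : 0 < n) {x : L n} :
    leL n 0 x ∧ leL n x (cc n) ↔ x = x1 n ∨ x = x2 n ∨ ∃ k : ℤ, 0 ≤ k ∧ k ≤ n ∧ x = k • x3 n := by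
  refine ⟨fun h => eq_of_nonneg_of_le_cc hn h.1 h.2, ?_⟩
  simp only [leL, sub_zero]
  rintro (rfl | rfl | ⟨k, hk0, hkn, rfl⟩)
  · refine ⟨nonneg_x1 hn, ?_⟩
    rw [cc, two_zsmul, add_sub_cancel_right]
    exact nonneg_x1 hn
  · refine ⟨nonneg_x2 hn, ?_⟩
    rw [← two_zsmul_x2, two_zsmul, add_sub_cancel_right]
    exact nonneg_x2 hn
  · refine ⟨nonneg_zsmul_x3 hn hk0 hkn, ?_⟩
    rw [← natCast_zsmul_x3, ← sub_smul]
    exact nonneg_zsmul_x3 hn (by omega) (by omega)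

theorem setOf_nonneg_le_cc_eq (hn : 0 < n) : {x | leL n 0 x ∧ leL n x (cc n)} =
    insert (x1 n) (insert (x2 n) ((· • x3 n) '' Set.Icc (0 : ℤ) n)) := by
  ext x
  simp [nonneg_and_le_cc_iff hn, eq_comm, and_assoc]

theorem finite_setOf_nonneg_le_cc (hn : 0 < n) : {x | leL n 0 x ∧ leL n x (cc n)}.Finite := by
  rw [setOf_nonneg_le_cc_eq hn]
  exact (((Set.finite_Icc _ _).image _).insert _).insert _

theorem ncard_setOf_nonneg_le_cc_le (hn : 0 < n) :
    {x | leL n 0 x ∧ leL n x (cc n)}.ncard ≤ n + 3 := by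
  rw [setOf_nonneg_le_cc_eq hn]
  calc _ ≤ ((· • x3 n) '' Set.Icc (0 : ℤ) n).ncard + 2 := by
        grw [Set.ncard_insert_le, Set.ncard_insert_le]
    _ ≤ (Set.Icc (0 : ℤ) n).ncard + 2 := by grw [Set.ncard_image_le (Set.finite_Icc _ _)]
    _ = n + 3 := by simp [Set.ncard_eq_toFinset_card']

end

theorem tilting_line_bundle_index_set_general (n : ℕ) (hn : 2 ≤ n) (I : Finset (L n))
    (hall : ∀ x ∈ I, (leL n 0 x ∧ leL n x (cc n)) ∨ x = x1 n - x2 n)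
    (hpair : ∀ k : ℤ, 1 ≤ k → ¬(k • x3 n ∈ I ∧ x1 n - x2 n ∈ I))
    (hcard : I.card = n + 3) :
    (I : Set (L n)) = {x : L n | leL n 0 x ∧ leL n x (cc n)} := by
  have hn0 : 0 < n := by omega
  by_cases hw : x1 n - x2 n ∈ I
  · classical
    have hsub : I ⊆ {x1 n - x2 n, 0, x1 n, x2 n} := by
      intro x hx
      rcases hall x hx with hx' | rfl
      · rcases (nonneg_and_le_cc_iff hn0).1 hx' with rfl | rfl | ⟨k, hk0, -, rfl⟩
        · simp
        · simp
        · obtain rfl | hk1 : k = 0 ∨ 1 ≤ k := by omega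
          · simp
          · exact absurd ⟨hx, hw⟩ (hpair k hk1)
      · simp
    have := (Finset.card_le_card hsub).trans Finset.card_le_four
    omega
  · refine Set.eq_of_subset_of_ncard_le (fun x hx => ?_) ?_ (finite_setOf_nonneg_le_cc hn0)
    · exact (hall x hx).resolve_right (by rintro rfl; exact hw hx)
    · rw [Set.ncard_coe_finset, hcard]
      exact ncard_setOf_nonneg_le_cc_le hn0

/-- if `I ⊆ L` is finite with `0 ∈ I`, each `x ∈ I` satisfies `0 ≤ x ≤ c`
or `x = x₁ - x₂`, `I` contains no pair `{k·x₃, x₁ - x₂}` with `k ≥ 1`, and `|I| = n + 3`,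
then `I = {x : 0 ≤ x ≤ c}`. -/
theorem tilting_line_bundle_index_set (n : ℕ) (hn : 2 ≤ n) (I : Finset (L n))
    (h0 : (0 : L n) ∈ I)
    (hall : ∀ x ∈ I, (leL n 0 x ∧ leL n x (cc n)) ∨ x = x1 n - x2 n)
    (hpair : ∀ k : ℤ, 1 ≤ k → ¬(k • x3 n ∈ I ∧ x1 n - x2 n ∈ I))
    (hcard : I.card = n + 3) :
    (I : Set (L n)) = {x : L n | leL n 0 x ∧ leL n x (cc n)} :=
  tilting_line_bundle_index_set_general n hn I hall hpair hcard
end
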